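/- Let (x̃, f̃) be a solution of the error system. Then for all t ≥ 0, Γ ‖f̃(t)‖²_H ≤ x̃(0)ᵀ P x̃(0) + Γ ‖f̃(0)‖²_H and x̃(t)ᵀ P x̃(t) ≤ x̃(0)ᵀ P x̃(0) + Γ ‖f̃(0)‖²_H; in particular both the state error and the function error remain uniformly bounded in time. -/

import Mathlib

open scoped RealInnerProductSpace Matrix

/-! Along a solution, `V = ⟪x̃, P x̃⟫ + Γ ‖f̃‖²` has derivative `-⟪x̃, Q x̃⟫ ≤ 0`: the adaptation
law for `f̃` is chosen so that the cross terms `± 2 ⟪k(x), f̃⟫ ⟪B, P x̃⟫` produced by the two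
summands cancel, and the Lyapunov equation turns what remains into `-⟪x̃, Q x̃⟫`. So `V` is
nonincreasing on `[0, ∞)`, and since both of its summands are nonnegative, each of them stays
below `V 0`. -/

section ErrorSystem

variable {E H : Type*} [NormedAddCommGroup E] [InnerProductSpace ℝ E] [CompleteSpace E]
  [NormedAddCommGroup H] [InnerProductSpace ℝ H]

open ContinuousLinearMap

theorem two_mul_inner_apply_of_adjoint_mul_add_mul_eq_neg {a p q : E →L[ℝ] E}
    (hp : IsSelfAdjoint p) (hLyap : adjoint a * p + p * a = -q) (v : E) :
    2 * ⟪a v, p v⟫ = -⟪v, q v⟫ := by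
  have hpa : ⟪v, p (a v)⟫ = ⟪a v, p v⟫ :=
    (hp.isSymmetric v (a v)).symm.trans (real_inner_comm _ _)
  calc 2 * ⟪a v, p v⟫ = ⟪v, (adjoint a * p + p * a) v⟫ := by
        rw [add_apply, inner_add_right, mul_apply_eq_comp, mul_apply_eq_comp, adjoint_inner_right,
          hpa, two_mul]
    _ = -⟪v, q v⟫ := by rw [hLyap, neg_apply, inner_neg_right]

theorem IsSelfAdjoint.hasDerivAt_inner_apply_self {p : E →L[ℝ] E} (hp : IsSelfAdjoint p)
    {x : ℝ → E} {x' : E} {t : ℝ} (hx : HasDerivAt x x' t) :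
    HasDerivAt (fun s ↦ ⟪x s, p (x s)⟫) (2 * ⟪x', p (x t)⟫) t := by
  have hpx : ⟪x t, p x'⟫ = ⟪x', p (x t)⟫ :=
    (real_inner_comm _ _).trans (hp.isSymmetric x' (x t))
  refine (hx.inner ℝ (p.hasFDerivAt.comp_hasDerivAt t hx)).congr_deriv ?_
  rw [Function.comp_apply, hpx, two_mul]

def errorLyapunov (p : E →L[ℝ] E) (Γ : ℝ) (x : ℝ → E) (f : ℝ → H) (t : ℝ) : ℝ :=
  ⟪x t, p (x t)⟫ + Γ * ‖f t‖ ^ 2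

theorem hasDerivAt_errorLyapunov {a p q : E →L[ℝ] E} (hp : IsSelfAdjoint p)
    (hLyap : adjoint a * p + p * a = -q) {b : E} {Γ : ℝ} (hΓ : Γ ≠ 0) {x : ℝ → E} {f : ℝ → H}
    {g : H} {t : ℝ} (hx : HasDerivAt x (a (x t) + ⟪g, f t⟫ • b) t)
    (hf : HasDerivAt f (-(Γ⁻¹ * ⟪b, p (x t)⟫) • g) t) :
    HasDerivAt (errorLyapunov p Γ x f) (-⟪x t, q (x t)⟫) t := by
  refine ((hp.hasDerivAt_inner_apply_self hx).add (hf.norm_sq.const_mul Γ)).congr_deriv ?_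
  rw [← two_mul_inner_apply_of_adjoint_mul_add_mul_eq_neg hp hLyap, inner_add_left,
    real_inner_smul_left, real_inner_smul_right, real_inner_comm (f t)]
  field_simp
  ring

theorem antitoneOn_Ici_of_hasDerivAt_nonpos {V V' : ℝ → ℝ} {a : ℝ}
    (hV : ∀ s, a ≤ s → HasDerivAt V (V' s) s) (hV' : ∀ s, a ≤ s → V' s ≤ 0) :
    AntitoneOn V (Set.Ici a) := by
  refine antitoneOn_of_hasDerivWithinAt_nonpos (f' := V') (convex_Ici a)
    (fun s hs ↦ (hV s hs).continuousAt.continuousWithinAt) (fun s hs ↦ ?_) (fun s hs ↦ ?_)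
  all_goals rw [interior_Ici] at hs
  exacts [(hV s hs.le).hasDerivWithinAt, hV' s hs.le]

theorem errorLyapunov_le_errorLyapunov_zero {a p q : E →L[ℝ] E} (hp : IsSelfAdjoint p)
    (hq : ∀ v, 0 ≤ ⟪v, q v⟫) (hLyap : adjoint a * p + p * a = -q) {b : E} {Γ : ℝ} (hΓ : Γ ≠ 0)
    {x : ℝ → E} {f : ℝ → H} {g : ℝ → H}
    (hx : ∀ t, 0 ≤ t → HasDerivAt x (a (x t) + ⟪g t, f t⟫ • b) t)
    (hf : ∀ t, 0 ≤ t → HasDerivAt f (-(Γ⁻¹ * ⟪b, p (x t)⟫) • g t) t) {t : ℝ} (ht : 0 ≤ t) :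
    errorLyapunov p Γ x f t ≤ errorLyapunov p Γ x f 0 :=
  antitoneOn_Ici_of_hasDerivAt_nonpos
    (fun s hs ↦ hasDerivAt_errorLyapunov hp hLyap hΓ (hx s hs) (hf s hs))
    (fun s _ ↦ neg_nonpos.mpr (hq (x s))) Set.self_mem_Ici ht ht

end ErrorSystem

open ContinuousLinearMap in
theorem Matrix.adjoint_toEuclideanCLM_mul_add_mul_eq_neg {n : Type*} [Fintype n] [DecidableEq n]
    {A P Q : Matrix n n ℝ} (hLyap : Aᵀ * P + P * A = -Q) :
    adjoint (toEuclideanCLM (𝕜 := ℝ) A) * toEuclideanCLM (𝕜 := ℝ) P +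
      toEuclideanCLM (𝕜 := ℝ) P * toEuclideanCLM (𝕜 := ℝ) A = -toEuclideanCLM (𝕜 := ℝ) Q := by
  rw [← star_eq_adjoint, ← map_star, ← map_mul, ← map_mul, ← map_add, star_eq_conjTranspose,
    conjTranspose_eq_transpose_of_trivial, hLyap, map_neg]

theorem error_system_uniform_bound_general {H : Type*} [NormedAddCommGroup H]
    [InnerProductSpace ℝ H] {d : ℕ}
    (k : EuclideanSpace ℝ (Fin d) → H)
    (A : Matrix (Fin d) (Fin d) ℝ) (B : EuclideanSpace ℝ (Fin d))
    (Γ : ℝ) (hΓ : 0 < Γ)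
    (P Q : Matrix (Fin d) (Fin d) ℝ) (hP : P.PosDef) (hQ : Q.PosDef)
    (hLyap : Aᵀ * P + P * A = -Q)
    (x : ℝ → EuclideanSpace ℝ (Fin d))
    (xt : ℝ → EuclideanSpace ℝ (Fin d)) (ft : ℝ → H)
    (hxt : ∀ t : ℝ, 0 ≤ t →
      HasDerivAt xt (Matrix.toEuclideanLin A (xt t) + ⟪k (x t), ft t⟫ • B) t)
    (hft : ∀ t : ℝ, 0 ≤ t →
      HasDerivAt ft (-(Γ⁻¹ * ⟪B, Matrix.toEuclideanLin P (xt t)⟫) • k (x t)) t) :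
    ∀ t : ℝ, 0 ≤ t →
      Γ * ‖ft t‖ ^ 2 ≤ ⟪xt 0, Matrix.toEuclideanLin P (xt 0)⟫ + Γ * ‖ft 0‖ ^ 2 ∧
      ⟪xt t, Matrix.toEuclideanLin P (xt t)⟫ ≤
        ⟪xt 0, Matrix.toEuclideanLin P (xt 0)⟫ + Γ * ‖ft 0‖ ^ 2 := by
  intro t ht
  have hV : ⟪xt t, Matrix.toEuclideanLin P (xt t)⟫ + Γ * ‖ft t‖ ^ 2 ≤
      ⟪xt 0, Matrix.toEuclideanLin P (xt 0)⟫ + Γ * ‖ft 0‖ ^ 2 :=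
    errorLyapunov_le_errorLyapunov_zero (IsSelfAdjoint.map hP.1 _)
      (Matrix.isPositive_toEuclideanLin_iff.mpr hQ.posSemidef).inner_nonneg_right
      (Matrix.adjoint_toEuclideanCLM_mul_add_mul_eq_neg hLyap) hΓ.ne' hxt hft ht
  have hPxt := (Matrix.isPositive_toEuclideanLin_iff.mpr hP.posSemidef).inner_nonneg_right (xt t)
  have hΓft : 0 ≤ Γ * ‖ft t‖ ^ 2 := by positivity
  exact ⟨by linarith, by linarith⟩

/-- Monotonicity of the Lyapunov function implies that both the function error and the
state error of the error system remain uniformly bounded in time. -/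
theorem error_system_uniform_bound {H : Type*} [NormedAddCommGroup H]
    [InnerProductSpace ℝ H] [CompleteSpace H] {d : ℕ}
    (k : EuclideanSpace ℝ (Fin d) → H) (hk : Continuous k)
    (A : Matrix (Fin d) (Fin d) ℝ) (B : EuclideanSpace ℝ (Fin d))
    (Γ : ℝ) (hΓ : 0 < Γ)
    (P Q : Matrix (Fin d) (Fin d) ℝ) (hP : P.PosDef) (hQ : Q.PosDef)
    (hLyap : Aᵀ * P + P * A = -Q)
    (x : ℝ → EuclideanSpace ℝ (Fin d)) (hx : Continuous x)
    (xt : ℝ → EuclideanSpace ℝ (Fin d)) (ft : ℝ → H)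
    (hxt : ∀ t : ℝ, 0 ≤ t →
      HasDerivAt xt (Matrix.toEuclideanLin A (xt t) + ⟪k (x t), ft t⟫ • B) t)
    (hft : ∀ t : ℝ, 0 ≤ t →
      HasDerivAt ft (-(Γ⁻¹ * ⟪B, Matrix.toEuclideanLin P (xt t)⟫) • k (x t)) t) :
    ∀ t : ℝ, 0 ≤ t →
      Γ * ‖ft t‖ ^ 2 ≤ ⟪xt 0, Matrix.toEuclideanLin P (xt 0)⟫ + Γ * ‖ft 0‖ ^ 2 ∧
      ⟪xt t, Matrix.toEuclideanLin P (xt t)⟫ ≤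
        ⟪xt 0, Matrix.toEuclideanLin P (xt 0)⟫ + Γ * ‖ft 0‖ ^ 2 :=
  error_system_uniform_bound_general k A B Γ hΓ P Q hP hQ hLyap x xt ft hxt hft
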